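/- The map from finite sequences (m₁,…,m_k) with m₁, m_k positive integers and m₂,…,m_{k-1} nonnegative integers (for k ≥ 2; for k = 1 just m₁ a positive integer) to pairs (p,q) of relatively prime positive integers with p ≥ q, given by sending (m₁,…,m_k) to the numerator and denominator of [a₁,…,a_k]⁻ (with a_i defined from m_i as: a₁ = m₁ when k = 1; otherwise a₁ = m₁+1, a_k = m_k+1, a_i = m_i+2 for interior i), is a bijection. -/

import Mathlib

/-- The negative continued fraction `[a₁, …, a_k]⁻`, with `1/0 = 0` junk convention. -/
def ncf : List ℤ → ℚ
  | [] => 0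
  | a :: l => (a : ℚ) - 1 / ncf l

/-- From multipliers `m₁, …, m_k` form `a₁, …, a_k`: if `k = 1` then `a₁ = m₁`; if `k > 1`
then `a₁ = m₁ + 1`, `a_k = m_k + 1`, and `aᵢ = mᵢ + 2` for `1 < i < k`. -/
def mkA (m : List ℤ) : List ℤ :=
  if m.length ≤ 1 then m
  else m.mapIdx fun i x => if i = 0 ∨ i = m.length - 1 then x + 1 else x + 2

/-- A valid multiplier sequence: nonempty, `m₁ > 0`, `m_k > 0`, interior `mᵢ ≥ 0`. -/
def GoodM (m : List ℤ) : Prop :=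
  m ≠ [] ∧ 0 < m.headI ∧ 0 < m.getLast! ∧
    ∀ i, 0 < i → i + 1 < m.length → 0 ≤ m.getD i 0

/-- The numerator and denominator (in lowest terms) of `[a₁, …, a_k]⁻`. -/
def toPair (m : List ℤ) : ℕ × ℕ :=
  ((ncf (mkA m)).num.natAbs, (ncf (mkA m)).den)

/-! Entries `≥ 2` force `[a₂, …, a_k]⁻ > 1`, so `x = [a₁, …, a_k]⁻` lies in `(a₁ - 1, a₁)` and
`a₁ = ⌈x⌉` is read off `x`: the expansion of a rational `x > 1` is the greedy one, and it exists
because `1 / (⌈x⌉ - x)` has a smaller denominator than `x` (the denominator of `⌈x⌉ - x ∈ (0, 1)`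
is that of `x`, and its numerator is smaller). Thus `ncf` maps the nonempty sequences with entries
`≥ 2`, together with `[1]`, bijectively onto the rationals `≥ 1`; the shift `m ↦ a` is a bijection
from valid multiplier sequences onto exactly these sequences, and `x ↦ (num x, den x)` maps the
rationals `≥ 1` bijectively onto the coprime pairs `p ≥ q > 0`. -/

open Set

lemma ncf_singleton (a : ℤ) : ncf [a] = a := by
  simp [ncf]

lemma one_lt_ncf : ∀ {l : List ℤ}, l ≠ [] → (∀ a ∈ l, 2 ≤ a) → 1 < ncf l
  | [a], _, h2 => by
    have : (2 : ℚ) ≤ a := mod_cast h2 a (by simp)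
    rw [ncf_singleton]; linarith
  | a :: b :: l, _, h2 => by
    have ha : (2 : ℚ) ≤ a := mod_cast h2 a (by simp)
    have hl : 1 < ncf (b :: l) := one_lt_ncf (by simp) fun c hc ↦ h2 c (by simp_all)
    have : 1 / ncf (b :: l) < 1 := by rw [one_div]; exact inv_lt_one_of_one_lt₀ hl
    rw [ncf]; linarith

-- This includes `l = []`, through the junk value `1 / ncf [] = 1 / 0 = 0`.
lemma ceil_ncf_cons (a : ℤ) {l : List ℤ} (h2 : ∀ b ∈ l, 2 ≤ b) : ⌈ncf (a :: l)⌉ = a := by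
  rw [Int.ceil_eq_iff, ncf]
  rcases l with _ | ⟨b, l⟩
  · simp [ncf]
  · have hl := one_lt_ncf (List.cons_ne_nil b l) h2
    have : 1 / ncf (b :: l) < 1 := by rw [one_div]; exact inv_lt_one_of_one_lt₀ hl
    have : 0 < 1 / ncf (b :: l) := by positivity
    constructor <;> linarith

lemma injOn_ncf : InjOn ncf {l | ∀ a ∈ l, 2 ≤ a} := by
  intro l₁ h₁ l₂ h₂ h
  induction l₁ generalizing l₂ with
  | nil =>
    rcases l₂ with _ | ⟨b, l₂⟩
    · rfl
    · have := one_lt_ncf (List.cons_ne_nil b l₂) h₂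
      rw [← h] at this
      norm_num [ncf] at this
  | cons a l₁ ih =>
    rcases l₂ with _ | ⟨b, l₂⟩
    · have := one_lt_ncf (List.cons_ne_nil a l₁) h₁
      rw [h] at this
      norm_num [ncf] at this
    · have h₁' : ∀ c ∈ l₁, 2 ≤ c := fun c hc ↦ h₁ c (List.mem_cons_of_mem a hc)
      have h₂' : ∀ c ∈ l₂, 2 ≤ c := fun c hc ↦ h₂ c (List.mem_cons_of_mem b hc)
      obtain rfl : a = b := by rw [← ceil_ncf_cons a h₁', h, ceil_ncf_cons b h₂']
      have : ncf l₁ = ncf l₂ := by simpa [ncf] using h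
      rw [ih h₁' h₂' this]

def ncfSeqs : Set (List ℤ) := {l | l ≠ [] ∧ ∀ a ∈ l, 2 ≤ a}

lemma surjOn_ncf : SurjOn ncf ncfSeqs (Ioi 1) := by
  intro x hx
  induction hn : x.den using Nat.strong_induction_on generalizing x with
  | _ n ih =>
  set a := ⌈x⌉
  have hxa : x ≤ a := Int.le_ceil x
  have hax : (a : ℚ) < x + 1 := Int.ceil_lt_add_one x
  have ha : 2 ≤ a := by
    have : (1 : ℚ) < a := lt_of_lt_of_le hx hxa
    exact_mod_cast this
  rcases hxa.eq_or_lt with hxa | hxa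
  · exact ⟨[a], ⟨by simp, by simpa using ha⟩, by rw [ncf_singleton, hxa]⟩
  · have hd : 0 < (a : ℚ) - x := by linarith
    have hd1 : (a : ℚ) - x < 1 := by linarith
    have hy : 1 < ((a : ℚ) - x)⁻¹ := (one_lt_inv₀ hd).mpr hd1
    have hyden : ((a : ℚ) - x)⁻¹.den < n := by
      rw [Rat.den_inv_of_ne_zero hd.ne', ← hn, ← Rat.intCast_sub_den a x]
      have := Rat.num_lt_denom_iff.mpr hd1
      have := Rat.num_pos.mpr hd
      omega
    obtain ⟨l, ⟨-, hl⟩, hly⟩ := ih _ hyden hy rfl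
    refine ⟨a :: l, ⟨List.cons_ne_nil a l, ?_⟩, ?_⟩
    · simpa [ha] using hl
    · simp [ncf, hly]

lemma bijOn_ncf : BijOn ncf (insert [1] ncfSeqs) (Ici 1) := by
  rw [← Ioi_insert]
  have hbij : BijOn ncf ncfSeqs (Ioi 1) :=
    ⟨fun _ hl ↦ one_lt_ncf hl.1 hl.2, injOn_ncf.mono fun _ hl ↦ hl.2, surjOn_ncf⟩
  simpa [ncf_singleton] using hbij.insert (a := [1]) (by simp [ncf_singleton])

lemma bijOn_num_den : BijOn (fun x : ℚ ↦ (x.num.natAbs, x.den)) (Ici 1)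
    {pq : ℕ × ℕ | 0 < pq.2 ∧ pq.2 ≤ pq.1 ∧ Nat.Coprime pq.1 pq.2} := by
  refine ⟨fun x hx ↦ ⟨x.pos, ?_, x.reduced⟩, fun x hx y hy h ↦ ?_, fun ⟨p, q⟩ ⟨hq, hqp, hpq⟩ ↦ ?_⟩
  · show x.den ≤ x.num.natAbs
    have := Rat.num_lt_denom_iff.not.mpr (not_lt.mpr (mem_Ici.mp hx))
    omega
  · have := Rat.num_pos.mpr (lt_of_lt_of_le one_pos hx)
    have := Rat.num_pos.mpr (lt_of_lt_of_le one_pos hy)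
    simp only [Prod.mk.injEq] at h
    exact Rat.ext (by omega) h.2
  · have hcop : Nat.Coprime (p : ℤ).natAbs (q : ℤ).natAbs := hpq
    have hq' : (0 : ℤ) < q := mod_cast hq
    refine ⟨(p : ℤ) / (q : ℤ), ?_, ?_⟩
    · rw [mem_Ici, le_div_iff₀ (mod_cast hq)]
      simpa using hqp
    · have := Rat.den_div_eq_of_coprime hq' hcop
      simp only [Rat.num_div_eq_of_coprime hq' hcop, Int.natAbs_natCast, Prod.mk.injEq, true_and]
      omega

def mkAOffset (n i : ℕ) : ℤ :=
  if n ≤ 1 then 0 else if i = 0 ∨ i = n - 1 then 1 else 2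

@[simp]
lemma length_mkA (m : List ℤ) : (mkA m).length = m.length := by
  unfold mkA; split <;> simp

@[simp]
lemma getElem_mkA (m : List ℤ) (i : ℕ) (h : i < (mkA m).length) :
    (mkA m)[i] = m[i]'(by simpa using h) + mkAOffset m.length i := by
  unfold mkAOffset
  by_cases hm : m.length ≤ 1
  · simp [mkA, hm]
  · simp only [mkA, hm, if_false, List.getElem_mapIdx]
    split_ifs <;> rfl

def mkAEquiv : List ℤ ≃ List ℤ where
  toFun := mkA
  invFun l := l.mapIdx fun i x ↦ x - mkAOffset l.length i
  left_inv m := List.ext_getElem (by simp) fun i _ _ ↦ by simp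
  right_inv l := List.ext_getElem (by simp) fun i _ _ ↦ by simp

lemma goodM_iff (m : List ℤ) : GoodM m ↔ m ≠ [] ∧
    ∀ i (h : i < m.length), (if i = 0 ∨ i = m.length - 1 then 1 else 0 : ℤ) ≤ m[i] := by
  rcases m with _ | ⟨a, m⟩
  · simp [GoodM]
  · have hlast : (a :: m).getLast! = (a :: m)[m.length] := by
      rw [List.getLast!_of_getLast? (List.getLast?_eq_some_getLast (List.cons_ne_nil a m))]
      simp [List.getLast_eq_getElem]
    have hgetD : ∀ i (hi : i < m.length + 1), (a :: m).getD i 0 = (a :: m)[i] :=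
      fun i hi ↦ List.getD_eq_getElem _ _ _
    simp only [GoodM, ne_eq, reduceCtorEq, not_false_eq_true, true_and, List.headI_cons, hlast,
      List.length_cons, Nat.add_sub_cancel]
    constructor
    · rintro ⟨h0, hl, hint⟩ i hi
      split_ifs with hc
      · rcases hc with rfl | rfl
        exacts [h0, hl]
      · rw [← hgetD i hi]
        exact hint i (by omega) (by omega)
    · intro h
      have h0 := h 0 (by simp)
      have hl := h m.length (by simp)
      simp only [true_or, or_true, if_true, List.getElem_cons_zero] at h0 hl
      refine ⟨h0, hl, fun i hi0 hi ↦ ?_⟩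
      have := h i (by omega)
      rw [if_neg (by omega)] at this
      rwa [hgetD i (by omega)]

lemma mem_insert_ncfSeqs_iff (l : List ℤ) : l ∈ insert [1] ncfSeqs ↔ l ≠ [] ∧
    ∀ i (h : i < l.length), (if l.length = 1 then 1 else 2 : ℤ) ≤ l[i] := by
  rcases l with _ | ⟨a, _ | ⟨b, l⟩⟩
  · simp [ncfSeqs]
  · simpa [ncfSeqs] using (by omega : a = 1 ∨ 2 ≤ a ↔ 1 ≤ a)
  · simp [ncfSeqs, List.forall_mem_iff_getElem]

lemma bijOn_mkA : BijOn mkA {m | GoodM m} (insert [1] ncfSeqs) := by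
  refine mkAEquiv.bijOn fun m ↦ ?_
  simp only [mkAEquiv, Equiv.coe_fn_mk, mem_insert_ncfSeqs_iff, mem_ofPred_eq, goodM_iff,
    ne_eq, ← List.length_eq_zero_iff, length_mkA, getElem_mkA, mkAOffset]
  refine and_congr_right fun hm ↦ forall₂_congr fun i hi ↦ ?_
  split_ifs <;> omega

/-- The map sending a valid multiplier sequence `(m₁, …, m_k)` to the pair `(p, q)` with
`p/q = [a₁, …, a_k]⁻` in lowest terms is a bijection onto the set of pairs of relatively
prime positive integers `p ≥ q`. -/
theorem stmt16 :
    Set.BijOn toPair {m : List ℤ | GoodM m}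
      {pq : ℕ × ℕ | 0 < pq.2 ∧ pq.2 ≤ pq.1 ∧ Nat.Coprime pq.1 pq.2} :=
  bijOn_num_den.comp (bijOn_ncf.comp bijOn_mkA)
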